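/- arXiv:1010.2818 — 2 statements merged into one kernel-verified Lean document; each statement's English description precedes it below -/
import Mathlib

section
/- Mapping a satellite bridge back to a multicast structure (Lemma 4): any satellite bridge SB can be mapped to a pair (R, F) where R is a tree in G spanning the nodes in M, and F assigns to each node u of degree > 1 in R a set F(u) ⊆ {1,...,K} that is a hitting set of {Γ(v) : v ∈ nb_R(u)}, such that Σ_{u ∈ d⁺(R)} |F(u)| ≤ |N(SB)|. -/
/-- Rooted tree inside a graph `H`, encoded by a parent function and a depth
certificate of acyclicity; it serves as a multicast tree. -/
structure DCTree {α : Type*} (H : SimpleGraph α) (r : α) where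
  nodes : Finset α
  parent : α → α
  depth : α → ℕ
  root_mem : r ∈ nodes
  parent_mem : ∀ v ∈ nodes, v ≠ r → parent v ∈ nodes
  parent_adj : ∀ v ∈ nodes, v ≠ r → H.Adj (parent v) v
  depth_lt : ∀ v ∈ nodes, v ≠ r → depth (parent v) < depth v

namespace DCTree

variable {α : Type*} [DecidableEq α] {H : SimpleGraph α} {r : α}

/-- children of `u` in the rooted tree -/
def children (T : DCTree H r) (u : α) : Finset α :=
  T.nodes.filter fun v => v ≠ r ∧ T.parent v = u

/-- non-leaf nodes of the rooted tree -/
def nl (T : DCTree H r) : Finset α :=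
  T.nodes.filter fun u => (T.children u).Nonempty

/-- unrooted degree of a node in the tree -/
def deg (T : DCTree H r) (u : α) : ℕ :=
  (T.children u).card + (if u = r then 0 else 1)

/-- the set `d⁺(T)` of nodes of (unrooted) degree greater than one -/
def dplus (T : DCTree H r) : Finset α :=
  T.nodes.filter fun u => 1 < T.deg u

/-- the set `d¹(T)` of nodes of (unrooted) degree one -/
def d1 (T : DCTree H r) : Finset α :=
  T.nodes.filter fun u => T.deg u = 1

/-- tree-neighbours of a node: its children together with its parent -/
def nb (T : DCTree H r) (u : α) : Finset α :=
  T.children u ∪ (if u = r then ∅ else {T.parent u})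

end DCTree

section Hitting

variable {α β : Type*} [DecidableEq β]

/-- `B` is a hitting set of the collection `{Γ v | v ∈ s}`. -/
def HitsAll (Γ : α → Finset β) (s : Finset α) (B : Finset β) : Prop :=
  ∀ v ∈ s, (B ∩ Γ v).Nonempty

/-- the minimum cardinality of a hitting set of `{Γ v | v ∈ s}` -/
noncomputable def minHitCard (Γ : α → Finset β) (s : Finset α) : ℕ :=
  sInf {n | ∃ B : Finset β, HitsAll Γ s B ∧ B.card = n}

end Hitting

/-- `Ξ(T) = ∑_{u ∈ d⁺(T)} |Υ(u,T)|`, where `Υ(u,T)` is a minimum hitting set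
of the collection `{Γ v | v ∈ nb_T(u)}` -/
noncomputable def Xi {α β : Type*} [DecidableEq α] [DecidableEq β]
    {H : SimpleGraph α} {r : α} (Γ : α → Finset β) (T : DCTree H r) : ℕ :=
  ∑ u ∈ T.dplus, minHitCard Γ (T.nb u)

section Extended

variable {V S : Type*}

/-- adjacency of the extended graph: nuclear nodes `Sum.inl u` and satellite
nodes `Sum.inr (u, i)` (satellite `λ(u,i)` exists when `i ∈ ⋃_{v ∈ nb(u)} Γ v`). -/
def ExtAdj (G : SimpleGraph V) (Γ : V → Finset S) :
    V ⊕ V × S → V ⊕ V × S → Prop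
  | .inl _, .inl _ => False
  | .inl u, .inr (w, j) =>
      (w = u ∧ ∃ v, G.Adj u v ∧ j ∈ Γ v) ∨ (G.Adj u w ∧ j ∈ Γ u)
  | .inr (w, j), .inl u =>
      (w = u ∧ ∃ v, G.Adj u v ∧ j ∈ Γ v) ∨ (G.Adj u w ∧ j ∈ Γ u)
  | .inr (u, i), .inr (v, j) =>
      (u = v ∧ i ≠ j ∧ (∃ w, G.Adj u w ∧ i ∈ Γ w) ∧ (∃ w, G.Adj u w ∧ j ∈ Γ w)) ∨
        (G.Adj u v ∧ i ∈ Γ v ∧ j ∈ Γ u)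

/-- the extended graph of a duty-cycled WSN -/
def ExtGraph (G : SimpleGraph V) (Γ : V → Finset S) : SimpleGraph (V ⊕ V × S) where
  Adj := ExtAdj G Γ
  symm := by
    constructor
    rintro (u | ⟨u, i⟩) (v | ⟨v, j⟩) h
    · cases h
    · exact h
    · exact h
    · rcases h with ⟨rfl, hij, h1, h2⟩ | ⟨hadj, h1, h2⟩
      · exact Or.inl ⟨rfl, Ne.symm hij, h2, h1⟩
      · exact Or.inr ⟨hadj.symm, h2, h1⟩
  loopless := by
    constructor
    rintro (u | ⟨u, i⟩) h
    · cases h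
    · rcases h with ⟨_, h, _, _⟩ | ⟨h, _⟩
      · exact h rfl
      · exact h.ne rfl

/-- `N` is (the node set of) a satellite bridge: a connected set of existing
satellite nodes such that every terminal in `M` is adjacent to one of them. -/
def IsSatBridge (G : SimpleGraph V) (Γ : V → Finset S) (M : Finset V)
    (N : Finset (V × S)) : Prop :=
  (∀ p ∈ N, ∃ v, G.Adj p.1 v ∧ p.2 ∈ Γ v) ∧
    ((ExtGraph G Γ).induce {x | ∃ p ∈ N, x = Sum.inr p}).Connected ∧
    ∀ m ∈ M, ∃ p ∈ N, (ExtGraph G Γ).Adj (.inl m) (.inr p)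

end Extended

section Aux

variable {V S : Type*} [DecidableEq V] [DecidableEq S]

/-- auxiliary graph on nuclear nodes: edges realized by satellite-bridge edges -/
def bridgeGraph (G : SimpleGraph V) (Γ : V → Finset S) (N : Finset (V × S)) :
    SimpleGraph V where
  Adj a b := ∃ i j, (a, i) ∈ N ∧ (b, j) ∈ N ∧ G.Adj a b ∧ i ∈ Γ b ∧ j ∈ Γ a
  symm := by constructor; rintro a b ⟨i, j, h1, h2, h3, h4, h5⟩; exact ⟨j, i, h2, h1, h3.symm, h5, h4⟩
  loopless := by constructor; rintro a ⟨i, j, _, _, h, _, _⟩; exact h.ne rfl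

lemma bridge_reach (G : SimpleGraph V) (Γ : V → Finset S) (N : Finset (V × S))
    (hconn' : ((ExtGraph G Γ).induce {x | ∃ p ∈ N, x = Sum.inr p}).Connected)
    {p q : V × S} (hp : p ∈ N) (hq : q ∈ N) :
    (bridgeGraph G Γ N).Reachable p.1 q.1 := by
  set Sset : Set (V ⊕ V × S) := {x | ∃ p ∈ N, x = Sum.inr p} with hSset
  have hmem : ∀ a : V × S, a ∈ N → (Sum.inr a : V ⊕ V × S) ∈ Sset :=
    fun a ha => ⟨a, ha, rfl⟩
  have hr := hconn'.preconnected ⟨Sum.inr p, hmem p hp⟩ ⟨Sum.inr q, hmem q hq⟩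
  obtain ⟨w⟩ := hr
  -- generalize over the walk
  suffices H : ∀ (x y : ↥Sset) (_ : ((ExtGraph G Γ).induce Sset).Walk x y)
      (a b : V × S), a ∈ N → b ∈ N → x.val = Sum.inr a → y.val = Sum.inr b →
      (bridgeGraph G Γ N).Reachable a.1 b.1 by
    exact H _ _ w p q hp hq rfl rfl
  intro x y w
  induction w with
  | nil =>
    rintro a b ha hb hxa hxb
    rw [hxa] at hxb
    obtain rfl : a = b := Sum.inr_injective hxb
    exact SimpleGraph.Reachable.refl _
  | @cons x z y hadj w ih =>
    rintro a b ha hb hxa hyb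
    obtain ⟨c, hc, hzc⟩ := z.2
    have hadj' : (ExtGraph G Γ).Adj x.val z.val := hadj
    rw [hxa, hzc] at hadj'
    have step : (bridgeGraph G Γ N).Reachable a.1 c.1 := by
      obtain ⟨a1, a2⟩ := a
      obtain ⟨c1, c2⟩ := c
      rcases hadj' with ⟨h1, _, _, _⟩ | ⟨h1, h2, h3⟩
      · exact h1 ▸ SimpleGraph.Reachable.refl _
      · exact SimpleGraph.Adj.reachable ⟨a2, c2, ha, hc, h1, h2, h3⟩
    exact step.trans (ih c b hc hb hzc hyb)

lemma exists_closer {α : Type*} (H : SimpleGraph α) {r u : α}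
    (h : H.Reachable r u) (hne : u ≠ r) :
    ∃ b, H.Adj b u ∧ H.dist r b < H.dist r u := by
  obtain ⟨w, hw⟩ := h.exists_walk_length_eq_dist
  have hpos : 0 < H.dist r u := h.pos_dist_of_ne (Ne.symm hne)
  cases hwr : w.reverse with
  | nil => exact absurd rfl hne
  | @cons _ b _ hadj q =>
    refine ⟨b, hadj.symm, ?_⟩
    have hlen : q.length + 1 = H.dist r u := by
      have := congrArg SimpleGraph.Walk.length hwr
      simpa [hw] using this.symm
    have hdb : H.dist r b ≤ q.length := by
      have := SimpleGraph.dist_le q.reverse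
      simpa using this
    omega

end Aux

/-- **Lemma 4.** Any satellite bridge `SB` (with node set `N`)
can be mapped to a pair `(R, F)` where `R` is a tree in `G` spanning the nodes
in `M`, and `F` assigns to each node `u` of degree `> 1` in `R` a hitting set
`F(u)` of `{Γ(v) : v ∈ nb_R(u)}`, with `∑_{u ∈ d⁺(R)} |F(u)| ≤ |N(SB)|`. -/
theorem satellite_bridge_to_tree {V S : Type*} [DecidableEq V] [DecidableEq S]
    (G : SimpleGraph V) (hconn : G.Connected) (M : Finset V) (hM : M.Nonempty)
    (Γ : V → Finset S) (hΓ : ∀ v, (Γ v).Nonempty)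
    (N : Finset (V × S)) (hSB : IsSatBridge G Γ M N) :
    ∃ (s : V) (R : DCTree G s), M ⊆ R.nodes ∧
      ∃ F : V → Finset S,
        (∀ u ∈ R.dplus, HitsAll Γ (R.nb u) (F u)) ∧
        ∑ u ∈ R.dplus, (F u).card ≤ N.card := by
  classical
  obtain ⟨hexist, hconn', hcover⟩ := hSB
  -- N is nonempty
  obtain ⟨x0⟩ := hconn'.nonempty
  obtain ⟨p0, hp0, -⟩ := x0.2
  set H' := bridgeGraph G Γ N with hH'
  set A : Finset V := N.image Prod.fst with hA
  set r : V := p0.1 with hrdef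
  have hrA : r ∈ A := Finset.mem_image.2 ⟨p0, hp0, rfl⟩
  have hmemA : ∀ u ∈ A, ∃ i, (u, i) ∈ N := by
    intro u hu
    obtain ⟨⟨p1, p2⟩, hp, hpu⟩ := Finset.mem_image.1 hu
    dsimp at hpu
    subst hpu
    exact ⟨p2, hp⟩
  have hAfst : ∀ {p : V × S}, p ∈ N → p.1 ∈ A :=
    fun hp => Finset.mem_image.2 ⟨_, hp, rfl⟩
  -- closer-neighbour existence for nodes of A
  have hclose : ∀ u, u ∈ A → u ≠ r → ∃ b, H'.Adj b u ∧ H'.dist r b < H'.dist r u := by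
    intro u hu hne
    obtain ⟨i, hi⟩ := hmemA u hu
    have hreach : H'.Reachable r u := bridge_reach G Γ N hconn' hp0 hi
    exact exists_closer H' hreach hne
  -- attachment existence for terminals outside A
  have hattach : ∀ m, m ∈ M → m ∉ A → ∃ q : V × S, q ∈ N ∧ G.Adj q.1 m ∧ q.2 ∈ Γ m := by
    intro m hm hmA
    obtain ⟨p, hp, hadj⟩ := hcover m hm
    obtain ⟨p1, p2⟩ := p
    rcases hadj with ⟨heq, -⟩ | ⟨hadj, hΓm⟩
    · exact absurd (heq ▸ hAfst hp) hmA
    · exact ⟨(p1, p2), hp, hadj.symm, hΓm⟩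
  -- parent and depth functions
  set par : V → V := fun u =>
    if h : u ∈ A then
      (if h' : u = r then u else (hclose u h h').choose)
    else if h2 : u ∈ M then (hattach u h2 h).choose.1 else u with hpar
  set dep : V → ℕ := fun u =>
    if u ∈ A then H'.dist r u else (A.sup fun a => H'.dist r a) + 1 with hdep
  have hparA : ∀ u (h : u ∈ A) (h' : u ≠ r),
      H'.Adj (par u) u ∧ H'.dist r (par u) < H'.dist r u := by
    intro u h h'
    have : par u = (hclose u h h').choose := by simp [hpar, h, h']
    rw [this]
    exact (hclose u h h').choose_spec
  have hparM : ∀ u (h : u ∈ M) (h' : u ∉ A),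
      (par u, ((hattach u h h').choose).2) ∈ N ∧ G.Adj (par u) u ∧
        ((hattach u h h').choose).2 ∈ Γ u := by
    intro u h h'
    have hpu : par u = (hattach u h h').choose.1 := by simp [hpar, h, h']
    obtain ⟨h1, h2, h3⟩ := (hattach u h h').choose_spec
    exact ⟨by rwa [hpu], by rwa [hpu], h3⟩
  have hAdjA : ∀ {a b : V}, H'.Adj a b → a ∈ A := by
    rintro a b ⟨i, j, h1, h2, _⟩
    exact hAfst h1
  have hparmemA : ∀ u, u ∈ A ∪ M → u ≠ r → par u ∈ A := by
    intro u hu hne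
    by_cases h : u ∈ A
    · exact hAdjA (hparA u h hne).1
    · have hM : u ∈ M := (Finset.mem_union.1 hu).resolve_left h
      exact hAfst (hparM u hM h).1
  have hdepA : ∀ u ∈ A, dep u = H'.dist r u := by intro u hu; simp [hdep, hu]
  have hadjpf : ∀ u ∈ A ∪ M, u ≠ r → G.Adj (par u) u := by
    intro u hu hne
    by_cases h : u ∈ A
    · obtain ⟨i, j, _, _, hadj, _⟩ := (hparA u h hne).1
      exact hadj
    · exact (hparM u ((Finset.mem_union.1 hu).resolve_left h) h).2.1
  have hdeppf : ∀ u ∈ A ∪ M, u ≠ r → dep (par u) < dep u := by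
    intro u hu hne
    by_cases h : u ∈ A
    · have h1 := (hparA u h hne).2
      rw [hdepA _ (hAdjA (hparA u h hne).1), hdepA _ h]
      exact h1
    · have hM : u ∈ M := (Finset.mem_union.1 hu).resolve_left h
      have hpA : par u ∈ A := hAfst (hparM u hM h).1
      have : dep u = (A.sup fun a => H'.dist r a) + 1 := by simp [hdep, h]
      rw [this, hdepA _ hpA]
      exact Nat.lt_succ_of_le (Finset.le_sup hpA)
  set R : DCTree G r := ⟨A ∪ M, par, dep, Finset.mem_union_left _ hrA,
    fun u hu hne => Finset.mem_union_left _ (hparmemA u hu hne), hadjpf, hdeppf⟩ with hR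
  refine ⟨r, R, fun m hm => Finset.mem_union_right _ hm,
    fun u => (N.filter fun p => p.1 = u).image Prod.snd, ?_, ?_⟩
  · -- hitting property
    intro u hu v hv
    have hudeg : u ∈ A ∪ M ∧ 1 < R.deg u := by
      simpa [DCTree.dplus, hR] using hu
    -- u must be in A
    have huA : u ∈ A := by
      by_contra huA
      have hchild : R.children u = ∅ := by
        rw [Finset.eq_empty_iff_forall_notMem]
        intro w hw
        obtain ⟨hw1, hw2, hw3⟩ := by simpa [DCTree.children, hR] using hw
        exact huA (hw3 ▸ hparmemA w (Finset.mem_union.2 hw1) hw2)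
      have hner : u ≠ r := fun h => huA (h ▸ hrA)
      have : R.deg u = 1 := by rw [DCTree.deg, hchild]; simp [hner]
      omega
    have hFmem : ∀ {i : S}, (u, i) ∈ N →
        i ∈ (N.filter fun p => p.1 = u).image Prod.snd := by
      intro i hi
      exact Finset.mem_image.2 ⟨(u, i), Finset.mem_filter.2 ⟨hi, rfl⟩, rfl⟩
    rw [DCTree.nb, Finset.mem_union] at hv
    rcases hv with hv | hv
    · -- v is a child of u
      obtain ⟨hv1, hv2, hv3⟩ := by simpa [DCTree.children, hR] using hv
      by_cases h : v ∈ A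
      · obtain ⟨i, j, hiN, hjN, hadj, hiΓ, hjΓ⟩ := (hparA v h hv2).1
        rw [hv3] at hiN
        exact ⟨i, Finset.mem_inter.2 ⟨hFmem hiN, hiΓ⟩⟩
      · have hM : v ∈ M := hv1.resolve_left h
        obtain ⟨hjN, -, hjΓ⟩ := hparM v hM h
        rw [hv3] at hjN
        exact ⟨_, Finset.mem_inter.2 ⟨hFmem hjN, hjΓ⟩⟩
    · -- v is the parent of u
      by_cases hur : u = r
      · simp [hur, hR] at hv
      · have hv' : v = par u := by
          simp only [hR, hur, if_neg, not_false_iff] at hv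
          simpa using hv
        obtain ⟨i, j, hiN, hjN, hadj, hiΓ, hjΓ⟩ := (hparA u huA hur).1
        exact ⟨j, Finset.mem_inter.2 ⟨hFmem hjN, hv' ▸ hjΓ⟩⟩
  · -- the cardinality bound
    calc ∑ u ∈ R.dplus, ((N.filter fun p => p.1 = u).image Prod.snd).card
        ≤ ∑ u ∈ R.dplus, (N.filter fun p => p.1 = u).card :=
          Finset.sum_le_sum fun u _ => Finset.card_image_le
      _ = (R.dplus.biUnion fun u => N.filter fun p => p.1 = u).card := by
          refine (Finset.card_biUnion ?_).symm
          intro a _ b _ hab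
          refine Finset.disjoint_left.2 fun p hp hp' => ?_
          have h1 := (Finset.mem_filter.1 hp).2
          have h2 := (Finset.mem_filter.1 hp').2
          exact hab (h1 ▸ h2.symm ▸ rfl)
      _ ≤ N.card := by
          refine Finset.card_le_card ?_
          intro p hp
          obtain ⟨u, -, hpu⟩ := Finset.mem_biUnion.1 hp
          exact (Finset.mem_filter.1 hpu).1
end

section
/- Steiner tree connection bound (inequality (4) in Theorem 2): if C is any set of satellite nodes each adjacent (in the extended graph) to some node of M, and SB* is a satellite bridge, then there exists a tree in the satellite-induced subgraph of the extended graph whose node set contains N(SB*) ∪ C with at most |N(SB*)| + 3|C| − 1 edges; hence the minimum Steiner tree connecting C has at most |N(SB*)| + 3|C| − 1 edges (unit edge weights). -/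
section Aux

open SimpleGraph

/-- From reachability-with-support-constraint certificates one can build a `DCTree`. -/
lemma exists_dctree {β : Type*} [DecidableEq β] (H : SimpleGraph β) (r : β)
    (X : Finset β) (hr : r ∈ X)
    (hreach : ∀ v ∈ X, ∃ w : H.Walk r v, ∀ x ∈ w.support, x ∈ X) :
    ∃ T : DCTree H r, T.nodes = X := by
  classical
  set d : β → ℕ := fun v =>
    sInf {n | ∃ w : H.Walk r v, w.length = n ∧ ∀ x ∈ w.support, x ∈ X} with hd
  have hkey : ∀ v, v ∈ X → v ≠ r → ∃ u, u ∈ X ∧ H.Adj u v ∧ d u < d v := by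
    intro v hv hvr
    have hne : {n | ∃ w : H.Walk r v, w.length = n ∧ ∀ x ∈ w.support, x ∈ X}.Nonempty := by
      obtain ⟨w, hw⟩ := hreach v hv
      exact ⟨w.length, w, rfl, hw⟩
    obtain ⟨w, hwl, hws⟩ := Nat.sInf_mem hne
    obtain ⟨u, hadj, q, hq⟩ := Walk.exists_eq_cons_of_ne hvr w.reverse
    have hqs : ∀ x ∈ q.support, x ∈ X := by
      intro x hx
      have h1 : x ∈ w.reverse.support := by rw [hq]; simp [Walk.support_cons, hx]
      rw [Walk.support_reverse, List.mem_reverse] at h1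
      exact hws x h1
    have hlen : d v = q.length + 1 := by
      have h2 : w.reverse.length = q.length + 1 := by rw [hq]; simp
      rw [Walk.length_reverse] at h2
      exact hwl.symm.trans h2
    have hdu : d u ≤ q.length := by
      apply Nat.sInf_le
      refine ⟨q.reverse, by simp, ?_⟩
      intro x hx
      rw [Walk.support_reverse, List.mem_reverse] at hx
      exact hqs x hx
    refine ⟨u, hqs u q.start_mem_support, hadj.symm, ?_⟩
    omega
  choose! f hf1 hf2 hf3 using hkey
  exact ⟨⟨X, f, d, hr, hf1, hf2, hf3⟩, rfl⟩

set_option linter.unusedSectionVars false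
variable {V S : Type*} [DecidableEq V] [DecidableEq S]

/-- Every satellite adjacent to `m` is equal to or adjacent to some satellite of `m`. -/
lemma sat_of_terminal (G : SimpleGraph V) (Γ : V → Finset S) (hΓ : ∀ v, (Γ v).Nonempty)
    (m : V) (x : V × S) (hx : (ExtGraph G Γ).Adj (.inl m) (.inr x)) :
    ∃ s : V × S, s.1 = m ∧ (∃ v, G.Adj m v ∧ s.2 ∈ Γ v) ∧
      (s = x ∨ (ExtGraph G Γ).Adj (.inr s) (.inr x)) := by
  obtain ⟨w, j⟩ := x
  rcases hx with ⟨rfl, hv⟩ | ⟨hadj, hj⟩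
  · exact ⟨(w, j), rfl, hv, Or.inl rfl⟩
  · obtain ⟨i, hi⟩ := hΓ w
    exact ⟨(m, i), rfl, ⟨w, hadj, hi⟩, Or.inr (Or.inr ⟨hadj, hi, hj⟩)⟩

/-- Two satellites of the same nuclear node are equal or adjacent. -/
lemma sat_sat (G : SimpleGraph V) (Γ : V → Finset S) (m : V) (s t : V × S)
    (hs1 : s.1 = m) (hs2 : ∃ v, G.Adj m v ∧ s.2 ∈ Γ v)
    (ht1 : t.1 = m) (ht2 : ∃ v, G.Adj m v ∧ t.2 ∈ Γ v) :
    s = t ∨ (ExtGraph G Γ).Adj (.inr s) (.inr t) := by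
  obtain ⟨u, i⟩ := s
  obtain ⟨v, j⟩ := t
  simp only at hs1 ht1
  subst hs1; subst ht1
  by_cases hij : i = j
  · exact Or.inl (by simp [hij])
  · exact Or.inr (Or.inl ⟨rfl, hij, hs2, ht2⟩)

/-- Extend a support-constrained walk by an "equal-or-adjacent" step. -/
lemma walk_step {β : Type*} [DecidableEq β] (H : SimpleGraph β) {r x y : β} (X : Finset β)
    (hw : ∃ w : H.Walk r x, ∀ z ∈ w.support, z ∈ X)
    (hxy : x = y ∨ H.Adj x y) (hy : y ∈ X) :
    ∃ w : H.Walk r y, ∀ z ∈ w.support, z ∈ X := by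
  obtain ⟨w, hws⟩ := hw
  rcases hxy with rfl | h
  · exact ⟨w, hws⟩
  · refine ⟨w.concat h, ?_⟩
    intro z hz
    rw [Walk.support_concat, List.mem_append] at hz
    rcases hz with hz | hz
    · exact hws z hz
    · rw [List.mem_singleton] at hz; exact hz ▸ hy

end Aux

/-- **inequality (4) in Theorem 2.** If `C` is a set of
satellite nodes each adjacent (in the extended graph) to some node of `M`, and
`SB*` is a satellite bridge with node set `N`, then there is a tree in the
satellite-induced subgraph of the extended graph whose node set contains
`N ∪ C` and which has at most `|N| + 3|C| − 1` edges (equivalently, at most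
`|N| + 3|C|` nodes); hence any minimum Steiner tree connecting `C` has at most
`|N| + 3|C| − 1` edges, i.e. at most `|N| + 3|C|` nodes. -/
theorem steiner_tree_connection_bound {V S : Type*}
    [DecidableEq V] [DecidableEq S]
    (G : SimpleGraph V) (hconn : G.Connected) (M : Finset V) (hM : M.Nonempty)
    (Γ : V → Finset S) (hΓ : ∀ v, (Γ v).Nonempty)
    (N : Finset (V × S)) (hSB : IsSatBridge G Γ M N)
    (C : Finset (V × S))
    (hC : ∀ c ∈ C, ∃ m ∈ M, (ExtGraph G Γ).Adj (.inl m) (.inr c)) :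
    (∃ (r : V × S) (t : DCTree (SimpleGraph.comap Sum.inr (ExtGraph G Γ)) r),
        N ∪ C ⊆ t.nodes ∧ t.nodes.card ≤ N.card + 3 * C.card) ∧
    (∀ (r' : V × S) (t' : DCTree (SimpleGraph.comap Sum.inr (ExtGraph G Γ)) r'),
        C ⊆ t'.nodes →
        (∀ (r'' : V × S)
            (t'' : DCTree (SimpleGraph.comap Sum.inr (ExtGraph G Γ)) r''),
            C ⊆ t''.nodes → t'.nodes.card ≤ t''.nodes.card) →
        t'.nodes.card ≤ N.card + 3 * C.card) := by
  classical
  set H : SimpleGraph (V × S) := SimpleGraph.comap Sum.inr (ExtGraph G Γ) with hH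
  obtain ⟨hexist, hconn', hbridge⟩ := hSB
  -- choose a root in N
  obtain ⟨m0, hm0⟩ := hM
  obtain ⟨r, hrN, -⟩ := hbridge m0 hm0
  -- walks within N between bridge nodes
  have hNwalk : ∀ q ∈ N, ∃ w : H.Walk r q, ∀ x ∈ w.support, x ∈ N := by
    intro q hq
    set Sset : Set (V ⊕ V × S) := {x | ∃ p ∈ N, x = Sum.inr p} with hSset
    let φ : (ExtGraph G Γ).induce Sset →g H :=
      { toFun := fun z => Sum.elim (fun _ => r) id z.val
        map_rel' := by
          rintro ⟨a, pa, hpa, rfl⟩ ⟨b, pb, hpb, rfl⟩ hab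
          exact hab }
    have hra : (Sum.inr r : V ⊕ V × S) ∈ Sset := ⟨r, hrN, rfl⟩
    have hqa : (Sum.inr q : V ⊕ V × S) ∈ Sset := ⟨q, hq, rfl⟩
    obtain ⟨w⟩ := hconn' ⟨Sum.inr r, hra⟩ ⟨Sum.inr q, hqa⟩
    refine ⟨w.map φ, ?_⟩
    intro x hx
    have hx : x ∈ (SimpleGraph.Walk.map φ w).support := hx
    rw [SimpleGraph.Walk.support_map, List.mem_map] at hx
    obtain ⟨z, hz, rfl⟩ := hx
    obtain ⟨p, hpN, hp⟩ := z.2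
    have hφ : φ z = p := by
      show Sum.elim (fun _ => r) id (z : V ⊕ V × S) = p
      rw [hp]; rfl
    rw [hφ]; exact hpN
  -- per-terminal-satellite data: p ∈ N, and intermediate satellites b, a
  have hstep : ∀ c ∈ C, ∃ p a b : V × S, p ∈ N ∧
      (p = b ∨ H.Adj p b) ∧ (b = a ∨ H.Adj b a) ∧ (a = c ∨ H.Adj a c) := by
    intro c hc
    obtain ⟨m, hmM, hmc⟩ := hC c hc
    obtain ⟨p, hpN, hmp⟩ := hbridge m hmM
    obtain ⟨sa, hsa1, hsa2, hsa3⟩ := sat_of_terminal G Γ hΓ m c hmc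
    obtain ⟨sb, hsb1, hsb2, hsb3⟩ := sat_of_terminal G Γ hΓ m p hmp
    refine ⟨p, sa, sb, hpN, ?_, ?_, hsa3⟩
    · rcases hsb3 with rfl | h
      · exact Or.inl rfl
      · exact Or.inr ((ExtGraph G Γ).adj_symm h)
    · exact sat_sat G Γ m sb sa hsb1 hsb2 hsa1 hsa2
  choose! p a b hpN hpb hba hac using hstep
  -- the node set of the tree
  set X : Finset (V × S) := N ∪ C ∪ C.image a ∪ C.image b with hX
  have hNX : ∀ x ∈ N, x ∈ X := by
    intro x hx; simp [hX, Finset.mem_union, hx]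
  have hCX : ∀ x ∈ C, x ∈ X := by
    intro x hx; simp [hX, Finset.mem_union, hx]
  have haX : ∀ c ∈ C, a c ∈ X := by
    intro c hc; simp only [hX, Finset.mem_union]
    exact Or.inl (Or.inr (Finset.mem_image_of_mem a hc))
  have hbX : ∀ c ∈ C, b c ∈ X := by
    intro c hc; simp only [hX, Finset.mem_union]
    exact Or.inr (Finset.mem_image_of_mem b hc)
  have hrX : r ∈ X := hNX r hrN
  -- reachability within X
  have hwalkN : ∀ q ∈ N, ∃ w : H.Walk r q, ∀ x ∈ w.support, x ∈ X := by
    intro q hq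
    obtain ⟨w, hw⟩ := hNwalk q hq
    exact ⟨w, fun x hx => hNX x (hw x hx)⟩
  have hwalkb : ∀ c ∈ C, ∃ w : H.Walk r (b c), ∀ x ∈ w.support, x ∈ X := by
    intro c hc
    exact walk_step H X (hwalkN (p c) (hpN c hc)) (hpb c hc) (hbX c hc)
  have hwalka : ∀ c ∈ C, ∃ w : H.Walk r (a c), ∀ x ∈ w.support, x ∈ X := by
    intro c hc
    exact walk_step H X (hwalkb c hc) (hba c hc) (haX c hc)
  have hreach : ∀ v ∈ X, ∃ w : H.Walk r v, ∀ x ∈ w.support, x ∈ X := by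
    intro v hv
    simp only [hX, Finset.mem_union, Finset.mem_image] at hv
    rcases hv with ((hv | hv) | ⟨c, hc, rfl⟩) | ⟨c, hc, rfl⟩
    · exact hwalkN v hv
    · exact walk_step H X (hwalka v hv) (hac v hv) (hCX v hv)
    · exact hwalka c hc
    · exact hwalkb c hc
  obtain ⟨T, hT⟩ := exists_dctree H r X hrX hreach
  have hsub : N ∪ C ⊆ T.nodes := by
    rw [hT]
    intro x hx
    rcases Finset.mem_union.mp hx with hx | hx
    · exact hNX x hx
    · exact hCX x hx
  have hcard : T.nodes.card ≤ N.card + 3 * C.card := by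
    rw [hT]
    calc X.card ≤ (N ∪ C ∪ C.image a).card + (C.image b).card :=
          Finset.card_union_le _ _
      _ ≤ ((N ∪ C).card + (C.image a).card) + (C.image b).card := by
          exact Nat.add_le_add_right (Finset.card_union_le _ _) _
      _ ≤ ((N.card + C.card) + (C.image a).card) + (C.image b).card := by
          exact Nat.add_le_add_right (Nat.add_le_add_right (Finset.card_union_le _ _) _) _
      _ ≤ ((N.card + C.card) + C.card) + C.card := by
          exact Nat.add_le_add (Nat.add_le_add_left (Finset.card_image_le) _)
            (Finset.card_image_le)
      _ = N.card + 3 * C.card := by ring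
  refine ⟨⟨r, T, hsub, hcard⟩, ?_⟩
  intro r' t' hC' hmin
  have hCsub : C ⊆ T.nodes := fun x hx => hsub (Finset.mem_union_right _ hx)
  exact le_trans (hmin r T hCsub) hcard
end
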